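/- Elicitability under single crossing: let Y have distribution F with finite first moment, Λ: ℝ → (0,1) measurable, and suppose there is x̄ with F(t) < Λ(t) for t < x̄ and F(t) > Λ(t) for t > x̄. Define g(x) = E[S(x,Y)] with S(x,y) = (y-x)⁻ - ∫_y^x Λ(t) dt. Then for x₁ ≤ x₂, g(x₂) - g(x₁) = ∫_{x₁}^{x₂} (F(t) - Λ(t)) dt; consequently g is strictly decreasing on (-∞, x̄], strictly increasing on [x̄, ∞), and x̄ is the unique minimiser of g. -/

import Mathlib

open MeasureTheory intervalIntegral

open Set

/-! For each `y`, `x ↦ S(x, y)` is a primitive of `t ↦ 1{y ≤ t} - Λ t`. Taking expectations and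
swapping the two integrals (Fubini on `Ω × [x₁, x₂]`) gives `g x₂ - g x₁ = ∫_{x₁}^{x₂} (F - Λ)`,
whose integrand is negative left of `x̄` and positive right of it. -/

noncomputable def lambdaQuantileScore (Λ : ℝ → ℝ) (x y : ℝ) : ℝ :=
  max (-(y - x)) 0 - ∫ t in y..x, Λ t

lemma norm_indicator_one_le {α : Type*} (s : Set α) (a : α) : ‖s.indicator (1 : α → ℝ) a‖ ≤ 1 :=
  (norm_indicator_le_norm_self (f := 1) (s := s) (a := a)).trans_eq norm_one

lemma intervalIntegrable_of_norm_le {f : ℝ → ℝ} {C : ℝ} (hf : Measurable f)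
    (hC : ∀ t, ‖f t‖ ≤ C) (a b : ℝ) : IntervalIntegrable f volume a b :=
  intervalIntegrable_const.mono_fun' hf.aestronglyMeasurable (ae_of_all _ hC)

lemma intervalIntegral_indicator_Ici_one (y : ℝ) {a b : ℝ} (hab : a ≤ b) :
    ∫ t in a..b, (Ici y).indicator 1 t = max (b - y) 0 - max (a - y) 0 := by
  rw [integral_of_le hab, integral_indicator_one measurableSet_Ici,
    measureReal_restrict_apply measurableSet_Ici]
  rcases le_or_gt y a with hya | hay
  · rw [inter_eq_right.2 (Ioc_subset_Ioi_self.trans (Ioi_subset_Ici hya)),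
      Real.volume_real_Ioc_of_le hab, max_eq_left (by linarith), max_eq_left (by linarith)]
    ring
  · have hs : Ici y ∩ Ioc a b = Icc y b := by
      ext t
      simp only [mem_inter_iff, mem_Ioc, mem_Ici, mem_Icc]
      exact ⟨fun h => ⟨h.1, h.2.2⟩, fun h => ⟨h.1, hay.trans_le h.1, h.2⟩⟩
    rw [hs, Real.volume_real_Icc, max_eq_right (by linarith : a - y ≤ 0)]
    ring

section Score

variable {Λ : ℝ → ℝ}

lemma lambdaQuantileScore_sub (hΛ : ∀ a b, IntervalIntegrable Λ volume a b) (y : ℝ)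
    {x₁ x₂ : ℝ} (h : x₁ ≤ x₂) :
    lambdaQuantileScore Λ x₂ y - lambdaQuantileScore Λ x₁ y
      = ∫ t in x₁..x₂, ((Ici y).indicator 1 t - Λ t) := by
  have hind : IntervalIntegrable ((Ici y).indicator 1) volume x₁ x₂ :=
    intervalIntegrable_of_norm_le (measurable_one.indicator measurableSet_Ici)
      (norm_indicator_one_le _) x₁ x₂
  rw [integral_sub hind (hΛ x₁ x₂), intervalIntegral_indicator_Ici_one y h,
    ← integral_interval_sub_left (hΛ y x₂) (hΛ y x₁), lambdaQuantileScore, lambdaQuantileScore]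
  ring_nf

lemma continuous_lambdaQuantileScore (hΛ : ∀ a b, IntervalIntegrable Λ volume a b) (x : ℝ) :
    Continuous (lambdaQuantileScore Λ x) := by
  have hprim : Continuous fun y => ∫ t in y..x, Λ t := by
    simp only [integral_symm x]
    exact (continuous_primitive hΛ x).neg
  unfold lambdaQuantileScore
  fun_prop

lemma norm_lambdaQuantileScore_le {C : ℝ} (hC : ∀ t, ‖Λ t‖ ≤ C) (x y : ℝ) :
    ‖lambdaQuantileScore Λ x y‖ ≤ (1 + C) * ‖x - y‖ := by
  have hpos : ‖max (-(y - x)) 0‖ ≤ ‖x - y‖ := by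
    rw [Real.norm_of_nonneg (le_max_right _ _), neg_sub, Real.norm_eq_abs]
    exact max_le (le_abs_self _) (abs_nonneg _)
  have hint : ‖∫ t in y..x, Λ t‖ ≤ C * ‖x - y‖ :=
    norm_integral_le_of_norm_le_const fun t _ => hC t
  calc ‖lambdaQuantileScore Λ x y‖
      ≤ ‖max (-(y - x)) 0‖ + ‖∫ t in y..x, Λ t‖ := norm_sub_le _ _
    _ ≤ (1 + C) * ‖x - y‖ := by linarith

end Score

section Expectation

variable {Ω : Type*} [MeasurableSpace Ω] {μ : Measure Ω} [IsProbabilityMeasure μ]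
  {Y : Ω → ℝ} {Λ : ℝ → ℝ} {C : ℝ}

lemma integrable_lambdaQuantileScore_comp (hΛm : Measurable Λ) (hC : ∀ t, ‖Λ t‖ ≤ C)
    (hY : Integrable Y μ) (x : ℝ) : Integrable (fun ω => lambdaQuantileScore Λ x (Y ω)) μ :=
  Integrable.mono' (((integrable_const x).sub hY).norm.const_mul (1 + C))
    ((continuous_lambdaQuantileScore (intervalIntegrable_of_norm_le hΛm hC)
      x).comp_aestronglyMeasurable hY.1)
    (ae_of_all _ fun ω => norm_lambdaQuantileScore_le hC x (Y ω))

lemma integral_intervalIntegral_indicator_Ici_sub (hY : Measurable Y) (hΛm : Measurable Λ)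
    (hC : ∀ t, ‖Λ t‖ ≤ C) {a b : ℝ} (hab : a ≤ b) :
    ∫ ω, (∫ t in a..b, ((Ici (Y ω)).indicator 1 t - Λ t)) ∂μ
      = ∫ t in a..b, (μ.real {ω | Y ω ≤ t} - Λ t) := by
  have hint : Integrable (Function.uncurry fun ω t => (Ici (Y ω)).indicator 1 t - Λ t)
      (μ.prod (volume.restrict (Ioc a b))) := by
    refine Integrable.of_bound (C := 1 + C) ?_ (ae_of_all _ fun p => ?_)
    · exact (((measurable_one.indicator (measurableSet_le (hY.comp measurable_fst)
        measurable_snd)).sub (hΛm.comp measurable_snd))).aestronglyMeasurable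
    · exact (norm_sub_le _ _).trans (add_le_add (norm_indicator_one_le _ _) (hC p.2))
  simp_rw [integral_of_le hab]
  rw [integral_integral_swap hint]
  refine setIntegral_congr_fun measurableSet_Ioc fun t _ => ?_
  have hmeas : MeasurableSet {ω | Y ω ≤ t} := measurableSet_le hY measurable_const
  change ∫ ω, ({ω | Y ω ≤ t}.indicator 1 ω - Λ t) ∂μ = _
  rw [integral_sub ((integrable_const 1).indicator hmeas) (integrable_const _),
    integral_indicator_one hmeas, MeasureTheory.integral_const, probReal_univ, one_smul]

theorem integral_lambdaQuantileScore_sub (hY : Measurable Y) (hYi : Integrable Y μ)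
    (hΛm : Measurable Λ) (hC : ∀ t, ‖Λ t‖ ≤ C) {x₁ x₂ : ℝ} (h : x₁ ≤ x₂) :
    ∫ ω, lambdaQuantileScore Λ x₂ (Y ω) ∂μ - ∫ ω, lambdaQuantileScore Λ x₁ (Y ω) ∂μ
      = ∫ t in x₁..x₂, (μ.real {ω | Y ω ≤ t} - Λ t) := by
  rw [← integral_sub (integrable_lambdaQuantileScore_comp hΛm hC hYi x₂)
    (integrable_lambdaQuantileScore_comp hΛm hC hYi x₁)]
  simp_rw [lambdaQuantileScore_sub (intervalIntegrable_of_norm_le hΛm hC) _ h]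
  exact integral_intervalIntegral_indicator_Ici_sub hY hΛm hC h

end Expectation

section SignChange

variable {g f : ℝ → ℝ} {c : ℝ}

lemma strictMonoOn_Ici_of_sub_eq_integral
    (hg : ∀ x₁ x₂, x₁ ≤ x₂ → g x₂ - g x₁ = ∫ t in x₁..x₂, f t)
    (hf : ∀ a b, IntervalIntegrable f volume a b) (hpos : ∀ t > c, 0 < f t) :
    StrictMonoOn g (Ici c) := by
  intro x₁ hx₁ x₂ _ h
  have := intervalIntegral_pos_of_pos_on (hf x₁ x₂) (fun t ht => hpos t (hx₁.trans_lt ht.1)) h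
  linarith [hg x₁ x₂ h.le]

lemma strictAntiOn_Iic_of_sub_eq_integral
    (hg : ∀ x₁ x₂, x₁ ≤ x₂ → g x₂ - g x₁ = ∫ t in x₁..x₂, f t)
    (hf : ∀ a b, IntervalIntegrable f volume a b) (hneg : ∀ t < c, f t < 0) :
    StrictAntiOn g (Iic c) := by
  intro x₁ _ x₂ hx₂ h
  have := intervalIntegral_pos_of_pos_on (hf x₁ x₂).neg
    (fun t ht => neg_pos.2 (hneg t (ht.2.trans_le hx₂))) h
  simp only [Pi.neg_apply, intervalIntegral.integral_neg] at this
  linarith [hg x₁ x₂ h.le]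

end SignChange

theorem stmt_18_general {Ω : Type*} [MeasurableSpace Ω] (μ : Measure Ω) [IsProbabilityMeasure μ]
    (Y : Ω → ℝ) (hYmeas : Measurable Y) (hYint : Integrable Y μ)
    (Λ : ℝ → ℝ) (hΛmeas : Measurable Λ)
    (lm lM : ℝ)
    (hΛb : ∀ t, lm ≤ Λ t ∧ Λ t ≤ lM)
    (F : ℝ → ℝ) (hF : ∀ t, F t = (μ {ω | Y ω ≤ t}).toReal)
    (xbar : ℝ)
    (hlt : ∀ t < xbar, F t < Λ t) (hgt : ∀ t > xbar, F t > Λ t)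
    (g : ℝ → ℝ)
    (hg : ∀ x, g x = ∫ ω, (max (-(Y ω - x)) 0 - ∫ t in (Y ω)..x, Λ t) ∂μ) :
    (∀ x₁ x₂ : ℝ, x₁ ≤ x₂ → g x₂ - g x₁ = ∫ t in x₁..x₂, (F t - Λ t)) ∧
    StrictAntiOn g (Set.Iic xbar) ∧
    StrictMonoOn g (Set.Ici xbar) ∧
    (∀ x : ℝ, x ≠ xbar → g xbar < g x) := by
  have hC : ∀ t, ‖Λ t‖ ≤ max |lm| |lM| := fun t =>
    (Real.norm_eq_abs _).trans_le (abs_le_max_abs_abs (hΛb t).1 (hΛb t).2)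
  obtain rfl : F = fun t => μ.real {ω | Y ω ≤ t} := funext hF
  have hF_sub_Λ : ∀ a b, IntervalIntegrable (fun t => μ.real {ω | Y ω ≤ t} - Λ t) volume a b :=
    fun a b => (Monotone.intervalIntegrable fun s t hst => measureReal_mono fun ω hω =>
      (show Y ω ≤ s from hω).trans hst).sub (intervalIntegrable_of_norm_le hΛmeas hC a b)
  have key : ∀ x₁ x₂ : ℝ, x₁ ≤ x₂ →
      g x₂ - g x₁ = ∫ t in x₁..x₂, (μ.real {ω | Y ω ≤ t} - Λ t) := fun x₁ x₂ h => by
    rw [hg, hg]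
    exact integral_lambdaQuantileScore_sub hYmeas hYint hΛmeas hC h
  have anti := strictAntiOn_Iic_of_sub_eq_integral key hF_sub_Λ fun t ht => sub_neg.2 (hlt t ht)
  have mono := strictMonoOn_Ici_of_sub_eq_integral key hF_sub_Λ fun t ht => sub_pos.2 (hgt t ht)
  refine ⟨key, anti, mono, fun x hx => ?_⟩
  rcases hx.lt_or_gt with h | h
  · exact anti h.le self_mem_Iic h
  · exact mono self_mem_Ici h.le h

theorem stmt_18 {Ω : Type*} [MeasurableSpace Ω] (μ : Measure Ω) [IsProbabilityMeasure μ]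
    (Y : Ω → ℝ) (hYmeas : Measurable Y) (hYint : Integrable Y μ)
    (Λ : ℝ → ℝ) (hΛmeas : Measurable Λ)
    (lm lM : ℝ) (hlm : 0 < lm) (hlM : lM < 1)
    (hΛb : ∀ t, lm ≤ Λ t ∧ Λ t ≤ lM)
    (F : ℝ → ℝ) (hF : ∀ t, F t = (μ {ω | Y ω ≤ t}).toReal)
    (xbar : ℝ)
    (hlt : ∀ t < xbar, F t < Λ t) (hgt : ∀ t > xbar, F t > Λ t)
    (g : ℝ → ℝ)
    (hg : ∀ x, g x = ∫ ω, (max (-(Y ω - x)) 0 - ∫ t in (Y ω)..x, Λ t) ∂μ) :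
    (∀ x₁ x₂ : ℝ, x₁ ≤ x₂ → g x₂ - g x₁ = ∫ t in x₁..x₂, (F t - Λ t)) ∧
    StrictAntiOn g (Set.Iic xbar) ∧
    StrictMonoOn g (Set.Ici xbar) ∧
    (∀ x : ℝ, x ≠ xbar → g xbar < g x) :=
  stmt_18_general μ Y hYmeas hYint Λ hΛmeas lm lM hΛb F hF xbar hlt hgt g hg
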